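/- arXiv:0809.2710 — 2 statements merged into one kernel-verified Lean document; each statement's English description precedes it below -/
import Mathlib

section
/- Let N : ℂ^k → ℂ^k be a 'normal' map, i.e. N = (N_1,...,N_{k-1},0) where each N_i is a polynomial in z_{i+1},...,z_k whose monomials z^α all satisfy |α| ≥ 2 and λ_i = α_{i+1} λ_{i+1} + ... + α_k λ_k (for fixed positive reals λ_1 ≥ ... ≥ λ_k). If A is an invertible diagonal linear map with entries a_1,...,a_k, then R = A + N is a bijection of ℂ^k and R^{-1} = A^{-1} + N' for some normal map N'. -/
open Finset

/-- The set of `i`-resonant degrees for the exponents `lam`. -/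
def ResDeg {k : ℕ} (lam : Fin (k + 1) → ℝ) (i : Fin (k + 1)) : Set (Fin (k + 1) → ℕ) :=
  {α | 2 ≤ ∑ j, α j ∧ (∀ j, j ≤ i → α j = 0) ∧
    lam i = ∑ j, (if i < j then (α j : ℝ) * lam j else 0)}

/-- `N` is a normal map: each coordinate `N_i` is a linear combination of resonant
monomials `z^α` with `α ∈ ResDeg lam i` (the last coordinate is automatically `0`
since there are no resonant degrees for the last index). -/
def IsNormal {k : ℕ} (lam : Fin (k + 1) → ℝ)
    (N : (Fin (k + 1) → ℂ) → Fin (k + 1) → ℂ) : Prop :=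
  ∃ (s : Finset (Fin (k + 1) → ℕ)) (c : Fin (k + 1) → (Fin (k + 1) → ℕ) → ℂ),
    (∀ i α, c i α ≠ 0 → α ∈ ResDeg lam i) ∧
    ∀ z i, N z i = ∑ α ∈ s, c i α * ∏ j, z j ^ α j

/-!
Solve `a_i z_i + N_i(z) = w_i` for `z_i` from the last coordinate down: since `N_i` involves only
the `z_j` with `j > i`, `z_i = a_i⁻¹ (w_i - N_i(z))` is a polynomial in `w` once the later
coordinates are. The correction `N'_i = -a_i⁻¹ N_i(z(w))` stays resonant because each defining
condition of resonance (order at least two, only variables after `i`, weighted homogeneity of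
weight `λ_i` when `z_j` has weight `λ_j`) survives substituting for every `z_j` a polynomial of
order at least one, in the variables from `j` on, weighted homogeneous of weight `λ_j`.
-/

open MvPolynomial

namespace MvPolynomial

variable {σ τ R M : Type*} [CommSemiring R]

theorem aeval_eq_of_mem_supported {S : Type*} [CommSemiring S] [Algebra R S]
    {s : Set σ} {p : MvPolynomial σ R} (hp : p ∈ supported R s) {f g : σ → S}
    (hfg : ∀ j ∈ s, f j = g j) : aeval f p = aeval g p :=
  eval₂Hom_congr' rfl (fun j hj _ => hfg j (mem_supported.1 hp hj)) rfl

theorem eval_bind₁ (f : τ → R) (g : σ → MvPolynomial τ R) (p : MvPolynomial σ R) :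
    eval f (bind₁ g p) = eval (fun j => eval f (g j)) p :=
  eval₂Hom_bind₁ _ _ _ _

theorem bind₁_mem_pow_idealOfVars {q : σ → MvPolynomial τ R} (hq : ∀ j, q j ∈ idealOfVars τ R)
    {p : MvPolynomial σ R} {n : ℕ} (hp : p ∈ idealOfVars σ R ^ n) :
    bind₁ q p ∈ idealOfVars τ R ^ n := by
  have hmap : (idealOfVars σ R).map (bind₁ q) ≤ idealOfVars τ R := by
    rw [Ideal.map_span, Ideal.span_le, ← Set.range_comp]
    rintro _ ⟨j, rfl⟩
    simpa using hq j
  have hpow : (idealOfVars σ R ^ n).map (bind₁ q) ≤ idealOfVars τ R ^ n := by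
    rw [Ideal.map_pow]
    exact Ideal.pow_right_mono hmap n
  exact hpow (Ideal.mem_map_of_mem _ hp)

theorem bind₁_mem_supported {q : σ → MvPolynomial τ R} {s : Set σ} {t : Set τ}
    {p : MvPolynomial σ R} (hp : p ∈ supported R s) (hq : ∀ j ∈ s, q j ∈ supported R t) :
    bind₁ q p ∈ supported R t := by
  have hle : supported R s ≤ (supported R t).comap (bind₁ q) :=
    Algebra.adjoin_le (by rintro _ ⟨j, hj, rfl⟩; simpa using hq j hj)
  exact hle hp

theorem IsWeightedHomogeneous.bind₁ [AddCommMonoid M] {w' : σ → M} {w : τ → M} {m : M}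
    {q : σ → MvPolynomial τ R} {p : MvPolynomial σ R} (hp : IsWeightedHomogeneous w' p m)
    (hq : ∀ j, IsWeightedHomogeneous w (q j) (w' j)) :
    IsWeightedHomogeneous w (bind₁ q p) m := by
  rw [p.as_sum, map_sum]
  refine IsWeightedHomogeneous.sum _ _ _ fun d hd => ?_
  rw [bind₁_monomial, ← hp (mem_support_iff.1 hd), Finsupp.weight_apply]
  exact (IsWeightedHomogeneous.prod _ _ _ fun j _ => (hq j).pow _).C_mul _

end MvPolynomial

section Resonance

variable {σ M : Type*} (R : Type*) [CommSemiring R] [LinearOrder σ] [AddCommMonoid M] (w : σ → M)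

noncomputable def resonantSubmodule (i : σ) : Submodule R (MvPolynomial σ R) :=
  (idealOfVars σ R ^ 2).restrictScalars R ⊓ Subalgebra.toSubmodule (supported R (Set.Ioi i)) ⊓
    weightedHomogeneousSubmodule R w (w i)

noncomputable def resonantCoordSubmodule (i : σ) : Submodule R (MvPolynomial σ R) :=
  (idealOfVars σ R).restrictScalars R ⊓ Subalgebra.toSubmodule (supported R (Set.Ici i)) ⊓
    weightedHomogeneousSubmodule R w (w i)

variable {R w}

theorem mem_resonantSubmodule_iff {i : σ} {p : MvPolynomial σ R} :
    p ∈ resonantSubmodule R w i ↔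
      ∀ d ∈ p.support, 2 ≤ d.degree ∧ (∀ j ≤ i, d j = 0) ∧ Finsupp.weight w d = w i := by
  simp only [resonantSubmodule, Submodule.mem_inf, Submodule.restrictScalars_mem,
    mem_pow_idealOfVars_iff, Subalgebra.mem_toSubmodule, mem_supported,
    mem_weightedHomogeneousSubmodule, IsWeightedHomogeneous, ← mem_support_iff, Set.subset_def,
    Finset.mem_coe, mem_vars_iff_mem_support, Set.mem_Ioi, Finsupp.mem_support_iff]
  constructor
  · rintro ⟨⟨hdeg, hvars⟩, hwt⟩ d hd
    exact ⟨hdeg d hd, fun j hj => by_contra fun h => (hvars j ⟨d, hd, h⟩).not_ge hj, hwt hd⟩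
  · intro h
    exact ⟨⟨fun d hd => (h d hd).1,
      fun j ⟨d, hd, hj⟩ => lt_of_not_ge fun hle => hj ((h d hd).2.1 j hle)⟩,
      fun d hd => (h d hd).2.2⟩

theorem mem_supported_of_mem_resonantSubmodule {i : σ} {p : MvPolynomial σ R}
    (hp : p ∈ resonantSubmodule R w i) : p ∈ supported R (Set.Ioi i) :=
  hp.1.2

theorem resonantSubmodule_le_resonantCoordSubmodule (i : σ) :
    resonantSubmodule R w i ≤ resonantCoordSubmodule R w i :=
  inf_le_inf_right _ <| inf_le_inf (Ideal.pow_le_self two_ne_zero)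
    (supported_mono Set.Ioi_subset_Ici_self)

theorem X_mem_resonantCoordSubmodule (i : σ) : X i ∈ resonantCoordSubmodule R w i :=
  ⟨⟨Ideal.subset_span ⟨i, rfl⟩, Algebra.subset_adjoin ⟨i, Set.self_mem_Ici, rfl⟩⟩,
    isWeightedHomogeneous_X R w i⟩

theorem bind₁_mem_resonantSubmodule {i : σ} {p : MvPolynomial σ R}
    (hp : p ∈ resonantSubmodule R w i) {q : σ → MvPolynomial σ R}
    (hq : ∀ j, q j ∈ resonantCoordSubmodule R w j) : bind₁ q p ∈ resonantSubmodule R w i :=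
  ⟨⟨bind₁_mem_pow_idealOfVars (fun j => (hq j).1.1) hp.1.1,
    bind₁_mem_supported hp.1.2 fun j hj => supported_mono (Set.Ici_subset_Ioi.2 hj) (hq j).1.2⟩,
    IsWeightedHomogeneous.bind₁ hp.2 fun j => (hq j).2⟩

end Resonance

section TriangularInverse

variable {σ K : Type*} [Field K] [LinearOrder σ] [WellFoundedGT σ] (a : σ → K)
  (p : σ → MvPolynomial σ K)

/-- The truncation to `j > i` only makes the recursion well founded; see `triangularInv_eq`. -/
noncomputable def triangularInv : σ → MvPolynomial σ K :=
  wellFounded_gt.fix fun i q =>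
    C (a i)⁻¹ * (X i - bind₁ (fun j => if h : i < j then q j h else 0) (p i))

noncomputable def triangularMap (z : σ → K) (i : σ) : K :=
  a i * z i + eval z (p i)

variable {a p}

theorem triangularInv_eq (hp : ∀ i, p i ∈ supported K (Set.Ioi i)) (i : σ) :
    triangularInv a p i = C (a i)⁻¹ * (X i - bind₁ (triangularInv a p) (p i)) := by
  rw [triangularInv, wellFounded_gt.fix_eq]
  congr 2
  exact aeval_eq_of_mem_supported (hp i) fun j hj => dif_pos hj

theorem triangularMap_eval_triangularInv (ha : ∀ i, a i ≠ 0)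
    (hp : ∀ i, p i ∈ supported K (Set.Ioi i)) (w : σ → K) :
    triangularMap a p (fun i => eval w (triangularInv a p i)) = w := by
  funext i
  rw [triangularMap, triangularInv_eq hp i]
  simp [eval_bind₁, ha i]

theorem triangularMap_injective (ha : ∀ i, a i ≠ 0) (hp : ∀ i, p i ∈ supported K (Set.Ioi i)) :
    Function.Injective (triangularMap a p) := by
  intro z z' h
  funext i
  induction i using WellFoundedGT.induction with
  | _ i IH =>
    have hN : eval z (p i) = eval z' (p i) := aeval_eq_of_mem_supported (hp i) IH
    have hi := congrFun h i
    simp only [triangularMap, hN] at hi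
    exact mul_left_cancel₀ (ha i) (add_right_cancel hi)

variable {M : Type*} [AddCommMonoid M] {w : σ → M}

theorem triangularInv_mem_resonantCoordSubmodule (hp : ∀ i, p i ∈ resonantSubmodule K w i)
    (i : σ) : triangularInv a p i ∈ resonantCoordSubmodule K w i := by
  induction i using WellFoundedGT.induction with
  | _ i IH =>
    rw [triangularInv, wellFounded_gt.fix_eq, C_mul']
    refine Submodule.smul_mem _ _ <| Submodule.sub_mem _ (X_mem_resonantCoordSubmodule i) <|
      resonantSubmodule_le_resonantCoordSubmodule i <|
        bind₁_mem_resonantSubmodule (hp i) fun j => ?_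
    split_ifs with h
    exacts [IH j h, zero_mem _]

theorem triangularInv_sub_mem_resonantSubmodule (hp : ∀ i, p i ∈ resonantSubmodule K w i)
    (i : σ) : triangularInv a p i - C (a i)⁻¹ * X i ∈ resonantSubmodule K w i := by
  have hsupp i := mem_supported_of_mem_resonantSubmodule (hp i)
  rw [triangularInv_eq hsupp i, mul_sub, sub_sub_cancel_left, C_mul']
  exact neg_mem <| Submodule.smul_mem _ _ <|
    bind₁_mem_resonantSubmodule (hp i) (triangularInv_mem_resonantCoordSubmodule hp)

end TriangularInverse

theorem mem_resDeg_iff {k : ℕ} (lam : Fin (k + 1) → ℝ) (i : Fin (k + 1))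
    (d : Fin (k + 1) →₀ ℕ) :
    ⇑d ∈ ResDeg lam i ↔ 2 ≤ d.degree ∧ (∀ j ≤ i, d j = 0) ∧ Finsupp.weight lam d = lam i := by
  have hwt : Finsupp.weight lam d = ∑ j, (d j : ℝ) * lam j := by
    simp [Finsupp.weight_apply, Finsupp.sum_fintype, nsmul_eq_mul]
  have hres (h0 : ∀ j ≤ i, d j = 0) :
      ∑ j, (if i < j then (d j : ℝ) * lam j else 0) = ∑ j, (d j : ℝ) * lam j :=
    sum_congr rfl fun j _ => by
      split_ifs with h
      · rfl
      · simp [h0 j (not_lt.1 h)]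
  simp only [ResDeg, Set.mem_ofPred_eq, Finsupp.degree_eq_sum, hwt]
  exact and_congr_right fun _ => ⟨fun ⟨h0, hw⟩ => ⟨h0, by rw [hw, hres h0]⟩,
    fun ⟨h0, hw⟩ => ⟨h0, by rw [hres h0, hw]⟩⟩

theorem isNormal_iff {k : ℕ} {lam : Fin (k + 1) → ℝ} {N : (Fin (k + 1) → ℂ) → Fin (k + 1) → ℂ} :
    IsNormal lam N ↔ ∃ p : Fin (k + 1) → MvPolynomial (Fin (k + 1)) ℂ,
      (∀ i, p i ∈ resonantSubmodule ℂ lam i) ∧ N = fun z i => eval z (p i) := by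
  constructor
  · rintro ⟨s, c, hc, hN⟩
    refine ⟨fun i => ∑ α ∈ s, monomial (Finsupp.equivFunOnFinite.symm α) (c i α),
      fun i => Submodule.sum_mem _ fun α _ => ?_, funext₂ fun z i => ?_⟩
    · by_cases hα : c i α = 0
      · simp [hα]
      refine mem_resonantSubmodule_iff.2 fun d hd => (mem_resDeg_iff lam i d).1 ?_
      rw [support_monomial, if_neg hα, mem_singleton] at hd
      simpa [hd] using hc i α hα
    · simp [hN, eval_monomial, Finsupp.prod_fintype]
  · rintro ⟨p, hp, rfl⟩
    refine ⟨(univ.biUnion fun i => (p i).support).map Finsupp.equivFunOnFinite.toEmbedding,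
      fun i α => coeff (Finsupp.equivFunOnFinite.symm α) (p i), fun i α hα => ?_, fun z i => ?_⟩
    · simpa using (mem_resDeg_iff lam i _).2
        (mem_resonantSubmodule_iff.1 (hp i) _ (mem_support_iff.2 hα))
    · simp only [sum_map, Equiv.coe_toEmbedding, Equiv.symm_apply_apply,
        Finsupp.equivFunOnFinite_apply]
      rw [eval_eq']
      refine sum_subset (subset_biUnion_of_mem (fun i => (p i).support) (mem_univ i))
        fun d _ hd => ?_
      rw [notMem_support_iff.1 hd, zero_mul]

theorem stmt2_general {k : ℕ} (lam : Fin (k + 1) → ℝ)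
    (N : (Fin (k + 1) → ℂ) → Fin (k + 1) → ℂ) (hN : IsNormal lam N)
    (a : Fin (k + 1) → ℂ) (ha : ∀ i, a i ≠ 0) :
    Function.Bijective (fun z (i : Fin (k + 1)) => a i * z i + N z i) ∧
      ∃ N' : (Fin (k + 1) → ℂ) → Fin (k + 1) → ℂ, IsNormal lam N' ∧
        (∀ w : Fin (k + 1) → ℂ,
          (fun (i : Fin (k + 1)) =>
              a i * ((a i)⁻¹ * w i + N' w i) + N (fun j => (a j)⁻¹ * w j + N' w j) i) = w) ∧
        (∀ z : Fin (k + 1) → ℂ,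
          (fun (i : Fin (k + 1)) =>
              (a i)⁻¹ * (a i * z i + N z i) + N' (fun j => a j * z j + N z j) i) = z) := by
  obtain ⟨p, hp, rfl⟩ := isNormal_iff.1 hN
  have hsupp i := mem_supported_of_mem_resonantSubmodule (hp i)
  set q := triangularInv a p
  set G : (Fin (k + 1) → ℂ) → Fin (k + 1) → ℂ := fun w i => eval w (q i)
  have hinj : Function.Injective (triangularMap a p) := triangularMap_injective ha hsupp
  have hright w : triangularMap a p (G w) = w := triangularMap_eval_triangularInv ha hsupp w
  have hleft z : G (triangularMap a p z) = z := hinj (hright _)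
  have hG w i : (a i)⁻¹ * w i + eval w (q i - C (a i)⁻¹ * X i) = G w i := by simp [G]
  refine ⟨⟨hinj, fun w => ⟨G w, hright w⟩⟩, fun w i => eval w (q i - C (a i)⁻¹ * X i),
    isNormal_iff.2 ⟨_, triangularInv_sub_mem_resonantSubmodule hp, rfl⟩,
    fun w => ?_, fun z => ?_⟩
  · simp only [hG]
    exact hright w
  · exact (funext fun i => hG (triangularMap a p z) i).trans (hleft z)

/-- If `N` is normal and `A = diag(a_1,...,a_k)` is invertible, then `R = A + N` is a
bijection of `ℂ^k` and `R⁻¹ = A⁻¹ + N'` for some normal map `N'`. -/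
theorem stmt2 {k : ℕ} (lam : Fin (k + 1) → ℝ) (hpos : ∀ i, 0 < lam i)
    (hmono : ∀ i j : Fin (k + 1), i ≤ j → lam j ≤ lam i)
    (N : (Fin (k + 1) → ℂ) → Fin (k + 1) → ℂ) (hN : IsNormal lam N)
    (a : Fin (k + 1) → ℂ) (ha : ∀ i, a i ≠ 0) :
    Function.Bijective (fun z (i : Fin (k + 1)) => a i * z i + N z i) ∧
      ∃ N' : (Fin (k + 1) → ℂ) → Fin (k + 1) → ℂ, IsNormal lam N' ∧
        (∀ w : Fin (k + 1) → ℂ,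
          (fun (i : Fin (k + 1)) =>
              a i * ((a i)⁻¹ * w i + N' w i) + N (fun j => (a j)⁻¹ * w j + N' w j) i) = w) ∧
        (∀ z : Fin (k + 1) → ℂ,
          (fun (i : Fin (k + 1)) =>
              (a i)⁻¹ * (a i * z i + N z i) + N' (fun j => a j * z j + N z j) i) = z) :=
  stmt2_general lam N hN a ha
end

section
/- With the notation of resonant maps: if R_1 = A_1 + N_1 and R_2 = A_2 + N_2 are resonant maps on ℂ^k (A_i diagonal invertible linear, N_i normal), then the composition R_1 ∘ R_2 has the form A_1 ∘ A_2 + N'' where N'' is a normal map. -/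
open Finset

/-- The monomial `z ^ α`. -/
def Mon {n : ℕ} (α : Fin n → ℕ) (z : Fin n → ℂ) : ℂ := ∏ j, z j ^ α j

lemma Mon_add {n : ℕ} (α β : Fin n → ℕ) (z : Fin n → ℂ) :
    Mon (α + β) z = Mon α z * Mon β z := by
  simp [Mon, pow_add, Finset.prod_mul_distrib]

/-- `f` is a linear combination of monomials with exponents in `S`. -/
def Comb {n : ℕ} (S : Set (Fin n → ℕ)) (f : (Fin n → ℂ) → ℂ) : Prop :=
  ∃ (s : Finset (Fin n → ℕ)) (c : (Fin n → ℕ) → ℂ),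
    (∀ α, c α ≠ 0 → α ∈ S) ∧ ∀ z, f z = ∑ α ∈ s, c α * Mon α z

lemma Comb.mono {n : ℕ} {S T : Set (Fin n → ℕ)} {f} (hST : S ⊆ T) (hf : Comb S f) :
    Comb T f := by
  obtain ⟨s, c, hc, hs⟩ := hf
  exact ⟨s, c, fun α h => hST (hc α h), hs⟩

lemma Comb.zero {n : ℕ} (S : Set (Fin n → ℕ)) : Comb S (fun _ => 0) :=
  ⟨∅, fun _ => 0, fun α h => absurd rfl h, fun z => by simp⟩

lemma Comb.smul {n : ℕ} {S : Set (Fin n → ℕ)} {f} (a : ℂ) (hf : Comb S f) :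
    Comb S (fun z => a * f z) := by
  obtain ⟨s, c, hc, hs⟩ := hf
  refine ⟨s, fun α => a * c α, fun α h => hc α (by intro h0; simp [h0] at h), fun z => ?_⟩
  dsimp only
  rw [hs z, Finset.mul_sum]
  exact Finset.sum_congr rfl fun α _ => by ring

lemma Comb.add {n : ℕ} {S : Set (Fin n → ℕ)} {f g} (hf : Comb S f) (hg : Comb S g) :
    Comb S (fun z => f z + g z) := by
  obtain ⟨s, c, hc, hs⟩ := hf
  obtain ⟨t, d, hd, ht⟩ := hg
  refine ⟨s ∪ t, fun α => (if α ∈ s then c α else 0) + (if α ∈ t then d α else 0), ?_, ?_⟩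
  · intro α h
    dsimp only at h
    by_contra hS
    have h1 : (if α ∈ s then c α else 0) = 0 := by
      split
      · by_contra h'; exact hS (hc α h')
      · rfl
    have h2 : (if α ∈ t then d α else 0) = 0 := by
      split
      · by_contra h'; exact hS (hd α h')
      · rfl
    rw [h1, h2] at h; simp at h
  · intro z
    dsimp only
    rw [hs z, ht z]
    have key : ∀ (w : Finset (Fin n → ℕ)) (e : (Fin n → ℕ) → ℂ), w ⊆ s ∪ t →
        ∑ α ∈ s ∪ t, (if α ∈ w then e α else 0) * Mon α z = ∑ α ∈ w, e α * Mon α z := by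
      intro w e hw
      rw [Finset.sum_congr rfl (fun α _ => ite_mul (α ∈ w) (e α) 0 (Mon α z)),
        Finset.sum_congr rfl (fun α _ => by rw [zero_mul]),
        Finset.sum_ite_mem, Finset.inter_eq_right.mpr hw]
    rw [Finset.sum_congr rfl (fun α _ => add_mul _ _ (Mon α z)), Finset.sum_add_distrib,
      key s c Finset.subset_union_left, key t d Finset.subset_union_right]

lemma Comb.sum {n : ℕ} {S : Set (Fin n → ℕ)} {ι : Type*} (t : Finset ι)
    (f : ι → (Fin n → ℂ) → ℂ) (h : ∀ x ∈ t, Comb S (f x)) :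
    Comb S (fun z => ∑ x ∈ t, f x z) := by
  classical
  induction t using Finset.induction_on with
  | empty => simpa using Comb.zero S
  | @insert a u hx ih =>
    have := (h a (Finset.mem_insert_self a u)).add (ih (fun x hx' => h x (Finset.mem_insert_of_mem hx')))
    simpa [Finset.sum_insert hx] using this

lemma Comb.mul {n : ℕ} {S T : Set (Fin n → ℕ)} {f g} (hf : Comb S f) (hg : Comb T g) :
    Comb {γ | ∃ a ∈ S, ∃ b ∈ T, a + b = γ} (fun z => f z * g z) := by
  classical
  obtain ⟨s, c, hc, hs⟩ := hf
  obtain ⟨t, d, hd, ht⟩ := hg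
  refine ⟨(s ×ˢ t).image (fun p => p.1 + p.2),
    fun γ => ∑ p ∈ (s ×ˢ t).filter (fun p => p.1 + p.2 = γ), c p.1 * d p.2, ?_, ?_⟩
  · intro γ h
    obtain ⟨p, hp, hne⟩ := Finset.exists_ne_zero_of_sum_ne_zero h
    have h1 : c p.1 ≠ 0 := fun h0 => hne (by simp [h0])
    have h2 : d p.2 ≠ 0 := fun h0 => hne (by simp [h0])
    exact ⟨p.1, hc _ h1, p.2, hd _ h2, (Finset.mem_filter.1 hp).2⟩
  · intro z
    dsimp only
    rw [hs z, ht z, Finset.sum_mul_sum, ← Finset.sum_product']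
    have hL : ∑ x ∈ s ×ˢ t, c x.1 * Mon x.1 z * (d x.2 * Mon x.2 z)
        = ∑ x ∈ s ×ˢ t, c x.1 * d x.2 * Mon (x.1 + x.2) z := by
      refine Finset.sum_congr rfl fun x _ => ?_
      rw [Mon_add]; ring
    rw [hL, ← Finset.sum_fiberwise_of_maps_to (g := fun p : (Fin n → ℕ) × (Fin n → ℕ) => p.1 + p.2)
      (fun p hp => Finset.mem_image_of_mem _ hp)
      (fun p => c p.1 * d p.2 * Mon (p.1 + p.2) z)]
    refine Finset.sum_congr rfl fun γ _ => ?_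
    rw [Finset.sum_mul]
    refine Finset.sum_congr rfl fun p hp => ?_
    rw [(Finset.mem_filter.1 hp).2]

/-- An auxiliary weighted set of exponents. -/
def Sset {k : ℕ} (lam : Fin (k + 1) → ℝ) (i : Fin (k + 1)) (w : ℝ) (d : ℕ) :
    Set (Fin (k + 1) → ℕ) :=
  {γ | (∀ m, m ≤ i → γ m = 0) ∧ (∑ m, (γ m : ℝ) * lam m) = w ∧ d ≤ ∑ m, γ m}

lemma Sset_add {k : ℕ} {lam : Fin (k + 1) → ℝ} {i : Fin (k + 1)} {w₁ w₂ : ℝ} {d₁ d₂ : ℕ}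
    {γ δ : Fin (k + 1) → ℕ} (hγ : γ ∈ Sset lam i w₁ d₁) (hδ : δ ∈ Sset lam i w₂ d₂) :
    γ + δ ∈ Sset lam i (w₁ + w₂) (d₁ + d₂) := by
  obtain ⟨h1, h2, h3⟩ := hγ
  obtain ⟨h1', h2', h3'⟩ := hδ
  refine ⟨fun m hm => by simp [Pi.add_apply, h1 m hm, h1' m hm], ?_, ?_⟩
  · rw [← h2, ← h2', ← Finset.sum_add_distrib]
    refine Finset.sum_congr rfl fun m _ => ?_
    push_cast [Pi.add_apply]
    ring
  · simp only [Pi.add_apply]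
    rw [Finset.sum_add_distrib]
    exact Nat.add_le_add h3 h3'

lemma Comb.mulS {k : ℕ} {lam : Fin (k + 1) → ℝ} {i : Fin (k + 1)} {w₁ w₂ : ℝ} {d₁ d₂ : ℕ}
    {f g} (hf : Comb (Sset lam i w₁ d₁) f) (hg : Comb (Sset lam i w₂ d₂) g) :
    Comb (Sset lam i (w₁ + w₂) (d₁ + d₂)) (fun z => f z * g z) :=
  (hf.mul hg).mono (by rintro γ ⟨a, ha, b, hb, rfl⟩; exact Sset_add ha hb)

lemma Comb.one {k : ℕ} (lam : Fin (k + 1) → ℝ) (i : Fin (k + 1)) :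
    Comb (Sset lam i 0 0) (fun _ => (1 : ℂ)) := by
  classical
  refine ⟨{0}, fun α => if α = 0 then 1 else 0, ?_, fun z => ?_⟩
  · intro α h
    have : α = 0 := by by_contra h0; simp [h0] at h
    subst this
    exact ⟨fun m _ => rfl, by simp, by simp⟩
  · simp [Mon]

lemma Comb.powS {k : ℕ} {lam : Fin (k + 1) → ℝ} {i : Fin (k + 1)} {w : ℝ} {f}
    (hf : Comb (Sset lam i w 1) f) (m : ℕ) :
    Comb (Sset lam i (m * w) m) (fun z => f z ^ m) := by
  induction m with
  | zero => simpa using Comb.one lam i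
  | succ m ih =>
    have := ih.mulS hf
    have hw : ((m : ℝ) * w + w) = ((m + 1 : ℕ) : ℝ) * w := by push_cast; ring
    rw [hw] at this
    simpa [pow_succ] using this

lemma Comb.prodS {k : ℕ} {lam : Fin (k + 1) → ℝ} {i : Fin (k + 1)}
    (α : Fin (k + 1) → ℕ) (f : Fin (k + 1) → (Fin (k + 1) → ℂ) → ℂ)
    (t : Finset (Fin (k + 1)))
    (h : ∀ j ∈ t, Comb (Sset lam i (lam j) 1) (f j)) :
    Comb (Sset lam i (∑ j ∈ t, (α j : ℝ) * lam j) (∑ j ∈ t, α j))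
      (fun z => ∏ j ∈ t, f j z ^ α j) := by
  classical
  induction t using Finset.induction_on with
  | empty => simpa using Comb.one lam i
  | @insert a u hx ih =>
    have hmul := ((h a (Finset.mem_insert_self a u)).powS (α a)).mulS
      (ih (fun x hx' => h x (Finset.mem_insert_of_mem hx')))
    simpa [Finset.sum_insert hx, Finset.prod_insert hx] using hmul

lemma ResDeg_subset_Sset {k : ℕ} {lam : Fin (k + 1) → ℝ} {i j : Fin (k + 1)} (hij : i < j) :
    ResDeg lam j ⊆ Sset lam i (lam j) 1 := by
  rintro β ⟨h1, h2, h3⟩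
  refine ⟨fun m hm => h2 m (le_of_lt (lt_of_le_of_lt hm hij)), ?_, le_trans one_le_two h1⟩
  rw [h3]
  refine Finset.sum_congr rfl fun m _ => ?_
  split
  · rfl
  · rename_i hm
    rw [h2 m (not_lt.1 hm)]
    simp

lemma single_mem_Sset {k : ℕ} {lam : Fin (k + 1) → ℝ} {i j : Fin (k + 1)} (hij : i < j) :
    (fun m => if m = j then 1 else 0) ∈ Sset lam i (lam j) 1 := by
  refine ⟨fun m hm => ?_, ?_, ?_⟩
  · have : m ≠ j := fun h => absurd (h ▸ hm) (not_le.2 hij)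
    simp [this]
  · rw [Finset.sum_eq_single j]
    · simp
    · intro m _ hm; simp [hm]
    · intro h; exact absurd (Finset.mem_univ j) h
  · rw [Finset.sum_eq_single j]
    · simp
    · intro m _ hm; simp [hm]
    · intro h; exact absurd (Finset.mem_univ j) h

lemma comb_single {n : ℕ} {S : Set (Fin n → ℕ)} {β : Fin n → ℕ} (hβ : β ∈ S) (a : ℂ) :
    Comb S (fun z => a * Mon β z) := by
  classical
  refine ⟨{β}, fun γ => if γ = β then a else 0, ?_, fun z => ?_⟩
  · intro γ h
    have : γ = β := by by_contra h0; simp [h0] at h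
    exact this ▸ hβ
  · simp

lemma Mon_single {n : ℕ} (j : Fin n) (z : Fin n → ℂ) :
    Mon (fun m => if m = j then 1 else 0) z = z j := by
  rw [Mon, Finset.prod_eq_single j]
  · simp
  · intro m _ hm; simp [hm]
  · intro h; exact absurd (Finset.mem_univ j) h

/-- Key lemma: a resonant monomial composed with coordinate functions that are
combinations over the weighted sets is a combination over resonant degrees. -/
lemma key_comb {k : ℕ} {lam : Fin (k + 1) → ℝ} {i : Fin (k + 1)} {α : Fin (k + 1) → ℕ}
    (hα : α ∈ ResDeg lam i) (f : Fin (k + 1) → (Fin (k + 1) → ℂ) → ℂ)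
    (hf : ∀ j, i < j → Comb (Sset lam i (lam j) 1) (f j)) :
    Comb (ResDeg lam i) (fun z => ∏ j, f j z ^ α j) := by
  classical
  obtain ⟨hdeg, hzero, hres⟩ := hα
  set t : Finset (Fin (k + 1)) := Finset.univ.filter (fun j => i < j) with ht
  have hprod : ∀ z, ∏ j, f j z ^ α j = ∏ j ∈ t, f j z ^ α j := by
    intro z
    symm
    refine Finset.prod_subset (Finset.subset_univ t) ?_
    intro x _ hx
    have : ¬ i < x := by simpa [ht] using hx
    rw [hzero x (not_lt.1 this), pow_zero]
  have hw : ∑ j ∈ t, (α j : ℝ) * lam j = lam i := by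
    rw [hres, Finset.sum_filter]
  have hd : ∑ j ∈ t, α j = ∑ j, α j := by
    refine Finset.sum_subset (Finset.subset_univ t) ?_
    intro x _ hx
    have : ¬ i < x := by simpa [ht] using hx
    exact hzero x (not_lt.1 this)
  have hcomb := Comb.prodS α f t (fun j hj => hf j (by simpa [ht] using hj))
  rw [hw, hd] at hcomb
  have hsub : Sset lam i (lam i) (∑ j, α j) ⊆ ResDeg lam i := by
    rintro γ ⟨h1, h2, h3⟩
    refine ⟨le_trans hdeg h3, h1, ?_⟩
    rw [← h2]
    refine Finset.sum_congr rfl fun m _ => ?_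
    split
    · rfl
    · rename_i hm
      rw [h1 m (not_lt.1 hm)]
      simp
  obtain ⟨s, c, hc, hs⟩ := hcomb.mono hsub
  refine ⟨s, c, hc, fun z => ?_⟩
  show ∏ j, f j z ^ α j = _
  rw [hprod z]
  exact hs z

/-- From per-coordinate combinations to `IsNormal`. -/
lemma isNormal_of_comb {k : ℕ} {lam : Fin (k + 1) → ℝ}
    {N : (Fin (k + 1) → ℂ) → Fin (k + 1) → ℂ}
    (h : ∀ i, Comb (ResDeg lam i) (fun z => N z i)) : IsNormal lam N := by
  classical
  choose s c hc hs using h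
  refine ⟨Finset.univ.biUnion s, fun i α => if α ∈ s i then c i α else 0, ?_, ?_⟩
  · intro i α h
    dsimp only at h
    have hmem : α ∈ s i := by by_contra h0; simp [h0] at h
    rw [if_pos hmem] at h
    exact hc i α h
  · intro z i
    dsimp only
    have h1 : N z i = ∑ α ∈ s i, c i α * Mon α z := hs i z
    rw [h1]
    have hsub : s i ⊆ Finset.univ.biUnion s :=
      fun α hα => Finset.mem_biUnion.2 ⟨i, Finset.mem_univ i, hα⟩
    have : ∑ α ∈ Finset.univ.biUnion s, (if α ∈ s i then c i α else 0) * ∏ j, z j ^ α j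
        = ∑ α ∈ s i, c i α * ∏ j, z j ^ α j := by
      rw [Finset.sum_congr rfl (fun α _ => ite_mul (α ∈ s i) (c i α) 0 (∏ j, z j ^ α j)),
        Finset.sum_congr rfl (fun α _ => by rw [zero_mul]),
        Finset.sum_ite_mem, Finset.inter_eq_right.mpr hsub]
    rw [this]
    exact Finset.sum_congr rfl fun α _ => rfl

/-- The composition of two resonant maps `R₁ = A₁ + N₁`, `R₂ = A₂ + N₂` is again
resonant, of the form `A₁ ∘ A₂ + N''` with `N''` normal. -/
theorem stmt3 {k : ℕ} (lam : Fin (k + 1) → ℝ) (hpos : ∀ i, 0 < lam i)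
    (hmono : ∀ i j : Fin (k + 1), i ≤ j → lam j ≤ lam i)
    (N₁ N₂ : (Fin (k + 1) → ℂ) → Fin (k + 1) → ℂ)
    (hN₁ : IsNormal lam N₁) (hN₂ : IsNormal lam N₂)
    (a₁ a₂ : Fin (k + 1) → ℂ) (ha₁ : ∀ i, a₁ i ≠ 0) (ha₂ : ∀ i, a₂ i ≠ 0) :
    ∃ N'' : (Fin (k + 1) → ℂ) → Fin (k + 1) → ℂ, IsNormal lam N'' ∧
      ∀ (z : Fin (k + 1) → ℂ) (i : Fin (k + 1)),
        a₁ i * (a₂ i * z i + N₂ z i) + N₁ (fun j => a₂ j * z j + N₂ z j) i =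
          a₁ i * (a₂ i * z i) + N'' z i := by
  classical
  obtain ⟨s₁, c₁, hc₁, hs₁⟩ := hN₁
  obtain ⟨s₂, c₂, hc₂, hs₂⟩ := hN₂
  refine ⟨fun z i => a₁ i * N₂ z i + N₁ (fun j => a₂ j * z j + N₂ z j) i, ?_, ?_⟩
  · apply isNormal_of_comb
    intro i
    have hN₂comb : ∀ j, Comb (ResDeg lam j) (fun z => N₂ z j) :=
      fun j => ⟨s₂, c₂ j, hc₂ j, fun z => hs₂ z j⟩
    have hRcomb : ∀ j, i < j → Comb (Sset lam i (lam j) 1)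
        (fun z => a₂ j * z j + N₂ z j) := by
      intro j hij
      have h1 : Comb (Sset lam i (lam j) 1) (fun z => a₂ j * z j) := by
        have h0 := comb_single (single_mem_Sset (lam := lam) hij) (a₂ j)
        have he : (fun z : Fin (k + 1) → ℂ => a₂ j * Mon (fun m => if m = j then 1 else 0) z)
            = fun z => a₂ j * z j := by
          funext z; rw [Mon_single]
        rwa [he] at h0
      exact h1.add ((hN₂comb j).mono (ResDeg_subset_Sset hij))
    have hpart1 : Comb (ResDeg lam i) (fun z => a₁ i * N₂ z i) :=
      (hN₂comb i).smul (a₁ i)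
    have hpart2 : Comb (ResDeg lam i)
        (fun z => N₁ (fun j => a₂ j * z j + N₂ z j) i) := by
      have heq : ∀ z, N₁ (fun j => a₂ j * z j + N₂ z j) i
          = ∑ α ∈ s₁, c₁ i α * ∏ j, (a₂ j * z j + N₂ z j) ^ α j := fun z => hs₁ _ i
      have : Comb (ResDeg lam i)
          (fun z => ∑ α ∈ s₁, c₁ i α * ∏ j, (a₂ j * z j + N₂ z j) ^ α j) := by
        apply Comb.sum
        intro α _
        by_cases hzero : c₁ i α = 0
        · simp only [hzero, zero_mul]
          exact Comb.zero _
        · exact (key_comb (hc₁ i α hzero)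
            (fun j z => a₂ j * z j + N₂ z j) hRcomb).smul (c₁ i α)
      obtain ⟨s, c, hc, hs⟩ := this
      refine ⟨s, c, hc, fun z => ?_⟩
      show N₁ (fun j => a₂ j * z j + N₂ z j) i = _
      rw [heq z]
      exact hs z
    exact hpart1.add hpart2
  · intro z i
    ring
end
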